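/- Fix 0 < λ ≤ 1, K ≥ 0, reals 0 < a < b and c < d < 0, and ω > 0. Let ξ : ℝ² → ℂ satisfy |ξ(p) − ξ(q)| ≤ K·|p − q|^λ for all p, q, and ξ(x,y) = 0 whenever (x,y) ∉ [a,b] × [c,d]. Then for every complex τ with |Im τ| < π/(2ω), the second complex derivative of G(τ) = ∬_{ℝ²} ξ(x,y) · e^{τω} / (x e^{τω} − y)^{2} dx dy exists and equals G″(τ) = ω² ∬_{ℝ²} ξ(x,y) · e^{τω} (x² e^{2τω} + 4xy e^{τω} + y²) / (x e^{τω} − y)^{4} dx dy. -/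

import Mathlib

/-!
Both derivatives are taken under the integral sign. Since `ξ` is Hölder, it is continuous,
and it vanishes off the compact box `[a,b] × [c,d]`, all of whose points `(x, y)` satisfy
`x > 0 > y`. On the strip `|Im τ| < π/(2ω)` the factor `e^{τω}` has positive real part, so
`x e^{τω} - y` has positive real part as well and the kernel `e^{τω}/(x e^{τω} - y)²` and its
`τ`-derivatives are jointly continuous on (strip) × (box). Bounding them on a compact
neighbourhood of `τ` times the box gives the domination needed to differentiate twice.
-/

open MeasureTheory Metric Filter Topology Complex

theorem continuous_of_norm_sub_le_mul_dist_rpow {X E : Type*} [PseudoMetricSpace X]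
    [SeminormedAddCommGroup E] {f : X → E} {K lam : ℝ} (hlam : 0 < lam)
    (hf : ∀ p q, ‖f p - f q‖ ≤ K * dist p q ^ lam) : Continuous f := by
  refine continuous_iff_continuousAt.2 fun p ↦ tendsto_iff_norm_sub_tendsto_zero.2 ?_
  have hbound : Tendsto (fun q ↦ K * dist q p ^ lam) (𝓝 p) (𝓝 0) := by
    simpa [Real.zero_rpow hlam.ne'] using
      (((continuous_id.dist (continuous_const (y := p))).rpow_const
        fun _ ↦ Or.inr hlam.le).const_mul K).tendsto p
  exact squeeze_zero (fun _ ↦ norm_nonneg _) (fun q ↦ hf q p) hbound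

theorem hasDerivAt_setIntegral_of_continuousOn {X 𝕜 E : Type*} [TopologicalSpace X] [T2Space X]
    [MeasurableSpace X] [OpensMeasurableSpace X] {μ : Measure X} [IsFiniteMeasureOnCompacts μ]
    [RCLike 𝕜] [NormedAddCommGroup E] [NormedSpace ℝ E] [NormedSpace 𝕜 E]
    {S : Set X} (hS : IsCompact S) {U : Set 𝕜} (hU : IsOpen U) {G G' : 𝕜 → X → E}
    (hG : ContinuousOn (Function.uncurry G) (U ×ˢ S))
    (hG' : ContinuousOn (Function.uncurry G') (U ×ˢ S))
    (hderiv : ∀ σ ∈ U, ∀ p ∈ S, HasDerivAt (G · p) (G' σ p) σ) {τ : 𝕜} (hτ : τ ∈ U) :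
    HasDerivAt (fun z ↦ ∫ p in S, G z p ∂μ) (∫ p in S, G' τ p ∂μ) τ := by
  obtain ⟨r, hr, hrU⟩ := nhds_basis_closedBall.mem_iff.1 (hU.mem_nhds hτ)
  obtain ⟨C, hC⟩ := ((isCompact_closedBall τ r).prod hS).exists_bound_of_continuousOn
    (hG'.mono (Set.prod_mono hrU le_rfl))
  have slice {F : 𝕜 → X → E} (hF : ContinuousOn (Function.uncurry F) (U ×ˢ S)) {σ : 𝕜}
      (hσ : σ ∈ U) : ContinuousOn (F σ) S :=
    hF.comp (Continuous.prodMk_right σ).continuousOn fun p hp ↦ ⟨hσ, hp⟩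
  refine (hasDerivAt_integral_of_dominated_loc_of_deriv_le (bound := fun _ ↦ C)
    (closedBall_mem_nhds τ hr) ?_ ((slice hG hτ).integrableOn_compact hS)
    ((slice hG' hτ).aestronglyMeasurable_of_isCompact hS hS.measurableSet) ?_
    (integrableOn_const hS.measure_ne_top) ?_).2
  · filter_upwards [hU.mem_nhds hτ] with σ hσ
    exact (slice hG hσ).aestronglyMeasurable_of_isCompact hS hS.measurableSet
  · filter_upwards [ae_restrict_mem hS.measurableSet] with p hp σ hσ
    exact hC (σ, p) ⟨hσ, hp⟩
  · filter_upwards [ae_restrict_mem hS.measurableSet] with p hp σ hσ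
    exact hderiv σ (hrU hσ) p hp

theorem hasDerivAt_integral_mul_of_continuousOn {X 𝕜 : Type*} [TopologicalSpace X] [T2Space X]
    [MeasurableSpace X] [OpensMeasurableSpace X] {μ : Measure X} [IsFiniteMeasureOnCompacts μ]
    [RCLike 𝕜] {S : Set X} (hS : IsCompact S) {U : Set 𝕜} (hU : IsOpen U) {ξ : X → 𝕜}
    (hξ : Continuous ξ) (hξS : ∀ p ∉ S, ξ p = 0) {g g' : 𝕜 → X → 𝕜}
    (hg : ContinuousOn (Function.uncurry g) (U ×ˢ S))
    (hg' : ContinuousOn (Function.uncurry g') (U ×ˢ S))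
    (hderiv : ∀ σ ∈ U, ∀ p ∈ S, HasDerivAt (g · p) (g' σ p) σ) {τ : 𝕜} (hτ : τ ∈ U) :
    HasDerivAt (fun z ↦ ∫ p, ξ p * g z p ∂μ) (∫ p, ξ p * g' τ p ∂μ) τ := by
  have integral_eq (h : X → 𝕜) : ∫ p in S, ξ p * h p ∂μ = ∫ p, ξ p * h p ∂μ :=
    setIntegral_eq_integral_of_forall_compl_eq_zero fun p hp ↦ by rw [hξS p hp, zero_mul]
  simp only [← integral_eq]
  exact hasDerivAt_setIntegral_of_continuousOn (G := fun z p ↦ ξ p * g z p)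
    (G' := fun z p ↦ ξ p * g' z p) hS hU ((hξ.comp continuous_snd).continuousOn.mul hg)
    ((hξ.comp continuous_snd).continuousOn.mul hg')
    (fun σ hσ p hp ↦ (hderiv σ hσ p hp).const_mul (ξ p)) hτ

noncomputable section

namespace LiouvilleQuakeBend

def strip (ω : ℝ) : Set ℂ := {z | |z.im| < Real.pi / (2 * ω)}

/-- Geodesics `(x, y)` of the hyperbolic plane crossing the geodesic from `0` to `∞`. -/
def crossing : Set (ℝ × ℝ) := {p | 0 < p.1 ∧ p.2 < 0}

variable {ω : ℝ}

theorem isOpen_strip : IsOpen (strip ω) :=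
  isOpen_lt (continuous_abs.comp continuous_im) continuous_const

theorem re_denom_pos (hω : 0 < ω) {z : ℂ} (hz : z ∈ strip ω) {p : ℝ × ℝ} (hp : p ∈ crossing) :
    0 < ((p.1 : ℂ) * exp (z * ω) - p.2).re := by
  have him : |(z * ω).im| < Real.pi / 2 := by
    rw [mul_comm, im_ofReal_mul, abs_mul, abs_of_pos hω]
    have := mul_lt_mul_of_pos_left (show |z.im| < _ from hz) hω
    rwa [mul_div_assoc', mul_comm 2 ω, mul_div_mul_left _ _ hω.ne'] at this
  have hcos : 0 < Real.cos (z * ω).im := Real.cos_pos_of_mem_Ioo (abs_lt.1 him)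
  simp only [sub_re, re_ofReal_mul, exp_re, ofReal_re]
  nlinarith [mul_pos hp.1 (mul_pos (Real.exp_pos (z * ω).re) hcos), hp.2]

theorem denom_ne_zero (hω : 0 < ω) {z : ℂ} (hz : z ∈ strip ω) {p : ℝ × ℝ} (hp : p ∈ crossing) :
    (p.1 : ℂ) * exp (z * ω) - p.2 ≠ 0 := fun h ↦ by
  simpa [h] using re_denom_pos hω hz hp

def kernel (ω : ℝ) (z : ℂ) (p : ℝ × ℝ) : ℂ :=
  exp (z * ω) / ((p.1 : ℂ) * exp (z * ω) - p.2) ^ 2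

def kernelDeriv (ω : ℝ) (z : ℂ) (p : ℝ × ℝ) : ℂ :=
  -(ω * exp (z * ω) * ((p.1 : ℂ) * exp (z * ω) + p.2)) / ((p.1 : ℂ) * exp (z * ω) - p.2) ^ 3

def kernelDeriv2 (ω : ℝ) (z : ℂ) (p : ℝ × ℝ) : ℂ :=
  exp (z * ω) * ((p.1 : ℂ) ^ 2 * exp (2 * z * ω) + 4 * p.1 * p.2 * exp (z * ω) + (p.2 : ℂ) ^ 2)
    / ((p.1 : ℂ) * exp (z * ω) - p.2) ^ 4

theorem hasDerivAt_kernel {z : ℂ} {p : ℝ × ℝ} (hD : (p.1 : ℂ) * exp (z * ω) - p.2 ≠ 0) :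
    HasDerivAt (kernel ω · p) (kernelDeriv ω z p) z := by
  have hE : HasDerivAt (fun z : ℂ ↦ exp (z * ω)) (exp (z * ω) * ω) z :=
    (hasDerivAt_mul_const (ω : ℂ)).cexp
  refine (hE.div (((hE.const_mul (p.1 : ℂ)).sub_const (p.2 : ℂ)).pow 2)
    (pow_ne_zero 2 hD)).congr_deriv ?_
  simp only [kernelDeriv, Pi.pow_apply, Nat.cast_ofNat, Nat.reduceSub, pow_one]
  generalize exp (z * ω) = w at hD ⊢
  field_simp
  ring

theorem hasDerivAt_kernelDeriv {z : ℂ} {p : ℝ × ℝ} (hD : (p.1 : ℂ) * exp (z * ω) - p.2 ≠ 0) :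
    HasDerivAt (kernelDeriv ω · p) (ω ^ 2 * kernelDeriv2 ω z p) z := by
  have hE : HasDerivAt (fun z : ℂ ↦ exp (z * ω)) (exp (z * ω) * ω) z :=
    (hasDerivAt_mul_const (ω : ℂ)).cexp
  have hN := ((hE.const_mul (ω : ℂ)).mul ((hE.const_mul (p.1 : ℂ)).add_const (p.2 : ℂ))).neg
  refine (hN.div (((hE.const_mul (p.1 : ℂ)).sub_const (p.2 : ℂ)).pow 3)
    (pow_ne_zero 3 hD)).congr_deriv ?_
  simp only [kernelDeriv2, Pi.pow_apply, Pi.mul_apply, Pi.neg_apply, Nat.cast_ofNat,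
    Nat.reduceSub, show (2 : ℂ) * z * ω = z * ω + z * ω by ring, exp_add]
  generalize exp (z * ω) = w at hD ⊢
  field_simp
  ring

theorem continuousOn_div_denom_pow (hω : 0 < ω) {N : ℂ × (ℝ × ℝ) → ℂ} (hN : Continuous N)
    (n : ℕ) : ContinuousOn (fun q ↦ N q / ((q.2.1 : ℂ) * exp (q.1 * ω) - q.2.2) ^ n)
      (strip ω ×ˢ crossing) :=
  hN.continuousOn.div (by fun_prop) fun q hq ↦ pow_ne_zero n (denom_ne_zero hω hq.1 hq.2)

theorem continuousOn_kernel (hω : 0 < ω) :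
    ContinuousOn (Function.uncurry (kernel ω)) (strip ω ×ˢ crossing) :=
  continuousOn_div_denom_pow hω (by fun_prop) 2

theorem continuousOn_kernelDeriv (hω : 0 < ω) :
    ContinuousOn (Function.uncurry (kernelDeriv ω)) (strip ω ×ˢ crossing) :=
  continuousOn_div_denom_pow hω (by fun_prop) 3

theorem continuousOn_kernelDeriv2 (hω : 0 < ω) :
    ContinuousOn (Function.uncurry fun z p ↦ (ω : ℂ) ^ 2 * kernelDeriv2 ω z p)
      (strip ω ×ˢ crossing) :=
  continuousOn_const.mul (continuousOn_div_denom_pow hω (by fun_prop) 4)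

end LiouvilleQuakeBend

end

theorem liouville_quakebend_second_deriv_general
    (lam K : ℝ) (hlam0 : 0 < lam)
    (a b c d : ℝ) (ha : 0 < a) (hd : d < 0)
    (ω : ℝ) (hω : 0 < ω)
    (ξ : ℝ × ℝ → ℂ)
    (hHolder : ∀ p q : ℝ × ℝ, ‖ξ p - ξ q‖ ≤ K * dist p q ^ lam)
    (hsupp : ∀ x y : ℝ, (x, y) ∉ Set.Icc a b ×ˢ Set.Icc c d → ξ (x, y) = 0)
    (τ : ℂ) (hτ : |τ.im| < Real.pi / (2 * ω)) :
    HasDerivAt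
      (deriv (fun τ : ℂ => ∫ p : ℝ × ℝ,
        ξ p * (Complex.exp (τ * ω) / ((p.1 : ℂ) * Complex.exp (τ * ω) - (p.2 : ℂ)) ^ 2)))
      (((ω : ℂ)) ^ 2 * ∫ p : ℝ × ℝ,
        ξ p * (Complex.exp (τ * ω)
            * ((p.1 : ℂ) ^ 2 * Complex.exp (2 * τ * ω)
              + 4 * (p.1 : ℂ) * (p.2 : ℂ) * Complex.exp (τ * ω) + (p.2 : ℂ) ^ 2)
          / ((p.1 : ℂ) * Complex.exp (τ * ω) - (p.2 : ℂ)) ^ 4))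
      τ := by
  open LiouvilleQuakeBend in
  have hξ : Continuous ξ := continuous_of_norm_sub_le_mul_dist_rpow hlam0 hHolder
  have hS : IsCompact (Set.Icc a b ×ˢ Set.Icc c d) := isCompact_Icc.prod isCompact_Icc
  have hcross : Set.Icc a b ×ˢ Set.Icc c d ⊆ crossing :=
    fun p hp ↦ ⟨ha.trans_le hp.1.1, hp.2.2.trans_lt hd⟩
  have hSU := Set.prod_mono (le_refl (strip ω)) hcross
  have hfirst {σ : ℂ} (hσ : σ ∈ strip ω) : HasDerivAt (fun z ↦ ∫ p, ξ p * kernel ω z p)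
      (∫ p, ξ p * kernelDeriv ω σ p) σ :=
    hasDerivAt_integral_mul_of_continuousOn hS isOpen_strip hξ (fun p hp ↦ hsupp p.1 p.2 hp)
      ((continuousOn_kernel hω).mono hSU) ((continuousOn_kernelDeriv hω).mono hSU)
      (fun _ hσ _ hp ↦ hasDerivAt_kernel (denom_ne_zero hω hσ (hcross hp))) hσ
  have hsecond : HasDerivAt (fun z ↦ ∫ p, ξ p * kernelDeriv ω z p)
      (∫ p, ξ p * (ω ^ 2 * kernelDeriv2 ω τ p)) τ :=
    hasDerivAt_integral_mul_of_continuousOn hS isOpen_strip hξ (fun p hp ↦ hsupp p.1 p.2 hp)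
      ((continuousOn_kernelDeriv hω).mono hSU) ((continuousOn_kernelDeriv2 hω).mono hSU)
      (fun _ hσ _ hp ↦ hasDerivAt_kernelDeriv (denom_ne_zero hω hσ (hcross hp))) hτ
  simp_rw [mul_left_comm (ξ _), integral_const_mul] at hsecond
  exact hsecond.congr_of_eventuallyEq <|
    eventually_of_mem (isOpen_strip.mem_nhds hτ) fun σ hσ ↦ (hfirst hσ).deriv

/-- Second complex derivative of the pairing of the extended Liouville map along
a simple quake-bend with a Hölder test function `ξ`, for `τ` in the strip
`|Im τ| < π/(2ω)`. -/
theorem liouville_quakebend_second_deriv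
    (lam K : ℝ) (hlam0 : 0 < lam) (hlam1 : lam ≤ 1) (hK : 0 ≤ K)
    (a b c d : ℝ) (ha : 0 < a) (hab : a < b) (hcd : c < d) (hd : d < 0)
    (ω : ℝ) (hω : 0 < ω)
    (ξ : ℝ × ℝ → ℂ)
    (hHolder : ∀ p q : ℝ × ℝ, ‖ξ p - ξ q‖ ≤ K * dist p q ^ lam)
    (hsupp : ∀ x y : ℝ, (x, y) ∉ Set.Icc a b ×ˢ Set.Icc c d → ξ (x, y) = 0)
    (τ : ℂ) (hτ : |τ.im| < Real.pi / (2 * ω)) :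
    HasDerivAt
      (deriv (fun τ : ℂ => ∫ p : ℝ × ℝ,
        ξ p * (Complex.exp (τ * ω) / ((p.1 : ℂ) * Complex.exp (τ * ω) - (p.2 : ℂ)) ^ 2)))
      (((ω : ℂ)) ^ 2 * ∫ p : ℝ × ℝ,
        ξ p * (Complex.exp (τ * ω)
            * ((p.1 : ℂ) ^ 2 * Complex.exp (2 * τ * ω)
              + 4 * (p.1 : ℂ) * (p.2 : ℂ) * Complex.exp (τ * ω) + (p.2 : ℂ) ^ 2)
          / ((p.1 : ℂ) * Complex.exp (τ * ω) - (p.2 : ℂ)) ^ 4))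
      τ :=
  liouville_quakebend_second_deriv_general lam K hlam0 a b c d ha hd ω hω ξ hHolder hsupp τ hτ
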